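/- Define the sequence H : ℕ → ℤ by H(0) = 1, H(1) = 1, and H(q) = 17·H(q−1) − H(q−2) − 3 for q ≥ 2. Then for every q ≥ 1, the triple (3, H(q), H(q+1)) is a generalized Markov triple, i.e., 9 + H(q)² + H(q+1)² + 3H(q) + 3H(q+1) + H(q)·H(q+1) = 18·H(q)·H(q+1). -/
import Mathlib

/-- H(q) = m_{(q−1)/q}: H(0) = 1, H(1) = 1, H(q) = 17·H(q−1) − H(q−2) − 3. -/
def H : ℕ → ℤ
  | 0 => 1
  | 1 => 1
  | (n + 2) => 17 * H (n + 1) - H n - 3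

/-- For every q ≥ 1, (3, H(q), H(q+1)) is a generalized Markov triple. -/
theorem gen_markov_q_minus_one_over_q_triple (q : ℕ) (hq : 1 ≤ q) :
    9 + H q ^ 2 + H (q + 1) ^ 2 + 3 * H q + 3 * H (q + 1) + H q * H (q + 1)
      = 18 * H q * H (q + 1) := by
  induction q, hq using Nat.le_induction with
  | base => decide
  | succ n hn ih =>
    have h : H (n + 2) = 17 * H (n + 1) - H n - 3 := rfl
    rw [h]
    ring_nf
    ring_nf at ih
    linarith [ih, sq_nonneg (H n)]
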